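/- arXiv:1902.05206 — 11 statements merged into one kernel-verified Lean document; each statement's English description precedes it below -/
import Mathlib

section
/- Let S be a field, p, q ∈ S, and define on S⁴ the map δ₀ : (u₁,u₂,v₁,v₂) ↦ (u₂, f(u,v), v₂, f(v,u)) where f(u,v) = -u₁ - u₂ + (p²-q²)/v₂. Then the function H₁(u₁,u₂,v₁,v₂) = P - Q, where P = p² - q² - u₁v₂ and Q = p² - q² - u₂v₁, is an integral of δ₀; i.e. H₁(δ₀(x)) = H₁(x) whenever the denominators v₂ and u₂ (of the map components) are nonzero. -/
/-- The function `H₁ = P - Q` is an integral of the (2,1)-reduction `δ₀` of the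
two-component potential KdV system. -/
theorem stmt0 {S : Type*} [Field S] (p q u1 u2 v1 v2 : S)
    (hv2 : v2 ≠ 0) (hu2 : u2 ≠ 0) :
    let f : S → S → S → S → S := fun a b _ d => -a - b + (p ^ 2 - q ^ 2) / d
    let H1 : S → S → S → S → S := fun a b c d =>
      (p ^ 2 - q ^ 2 - a * d) - (p ^ 2 - q ^ 2 - b * c)
    H1 u2 (f u1 u2 v1 v2) v2 (f v1 v2 u1 u2) = H1 u1 u2 v1 v2 := by
  simp only
  field_simp
  ring
end

section
/- Let S be a field, p, q ∈ S, and δ₀ : (u₁,u₂,v₁,v₂) ↦ (u₂, f(u,v), v₂, f(v,u)) with f(u,v) = -u₁ - u₂ + (p²-q²)/v₂. Then H₂(u₁,u₂,v₁,v₂) = (u₁+u₂)(v₁+v₂)PQ, where P = p² - q² - u₁v₂ and Q = p² - q² - u₂v₁, satisfies H₂(δ₀(x)) = H₂(x) whenever v₂ ≠ 0 and u₂ ≠ 0. -/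
/-- The function `H₂ = (u₁+u₂)(v₁+v₂)PQ` is an integral of the (2,1)-reduction `δ₀`
of the two-component potential KdV system. -/
theorem stmt1 {S : Type*} [Field S] (p q u1 u2 v1 v2 : S)
    (hv2 : v2 ≠ 0) (hu2 : u2 ≠ 0) :
    let f : S → S → S → S → S := fun a b _ d => -a - b + (p ^ 2 - q ^ 2) / d
    let H2 : S → S → S → S → S := fun a b c d =>
      (a + b) * (c + d) * (p ^ 2 - q ^ 2 - a * d) * (p ^ 2 - q ^ 2 - b * c)
    H2 u2 (f u1 u2 v1 v2) v2 (f v1 v2 u1 u2) = H2 u1 u2 v1 v2 := by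
  simp only
  field_simp
  ring
end

section
/- Let S be a field, p, q ∈ S, and define δ₁ : (u₁,u₂,v₁,v₂) ↦ (u₂, -u₁-u₂+(p²-q²)/v₂, v₂, v₁). Then H₂ = (u₁+u₂)(v₁+v₂)(p²-q²-u₁v₂)(p²-q²-u₂v₁) is an integral of δ₁: H₂(δ₁(x)) = H₂(x) whenever v₂ ≠ 0. -/
/-- `H₂` is an integral of the dual map `δ₁` of the (2,1)-reduction of the
two-component potential KdV system. -/
theorem stmt2 {S : Type*} [Field S] (p q u1 u2 v1 v2 : S) (hv2 : v2 ≠ 0) :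
    let H2 : S → S → S → S → S := fun a b c d =>
      (a + b) * (c + d) * (p ^ 2 - q ^ 2 - a * d) * (p ^ 2 - q ^ 2 - b * c)
    H2 u2 (-u1 - u2 + (p ^ 2 - q ^ 2) / v2) v2 v1 = H2 u1 u2 v1 v2 := by
  intro H2
  simp only [H2]
  field_simp
  ring
end

section
/- Let S be a field, p, q ∈ S, and define on S⁴ the maps δ₀ : (u₁,u₂,v₁,v₂) ↦ (u₂, f(u,v), v₂, f(v,u)) with f(u,v) = -u₁-u₂+(p²-q²)/v₂, δ₁ : (u₁,u₂,v₁,v₂) ↦ (u₂, f(u,v), v₂, v₁), δ₂ : (u₁,u₂,v₁,v₂) ↦ (u₂, u₁, v₂, f(v,u)), and δ₃ : (u₁,u₂,v₁,v₂) ↦ (u₂, u₁, v₂, v₁). Then δ₀ = δ₁ ∘ δ₃ ∘ δ₂ = δ₂ ∘ δ₃ ∘ δ₁ wherever both sides are defined. -/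
theorem stmt4_general {S : Type*} [Field S] (p q : S) (x : S × S × S × S) :
    let f : S → S → S → S → S := fun a b _ d => -a - b + (p ^ 2 - q ^ 2) / d
    let δ0 : S × S × S × S → S × S × S × S := fun y =>
      (y.2.1, f y.1 y.2.1 y.2.2.1 y.2.2.2, y.2.2.2, f y.2.2.1 y.2.2.2 y.1 y.2.1)
    let δ1 : S × S × S × S → S × S × S × S := fun y =>
      (y.2.1, f y.1 y.2.1 y.2.2.1 y.2.2.2, y.2.2.2, y.2.2.1)
    let δ2 : S × S × S × S → S × S × S × S := fun y =>
      (y.2.1, y.1, y.2.2.2, f y.2.2.1 y.2.2.2 y.1 y.2.1)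
    let δ3 : S × S × S × S → S × S × S × S := fun y =>
      (y.2.1, y.1, y.2.2.2, y.2.2.1)
    δ0 x = δ1 (δ3 (δ2 x)) ∧ δ0 x = δ2 (δ3 (δ1 x)) :=
  -- `f` ignores its third argument, so both composites agree with `δ0` componentwise by unfolding.
  ⟨rfl, rfl⟩

/-- The (2,1)-reduction `δ₀` of the two-component potential KdV system is the
composition of its dual maps: `δ₀ = δ₁ ∘ δ₃ ∘ δ₂ = δ₂ ∘ δ₃ ∘ δ₁` wherever defined. -/
theorem stmt4 {S : Type*} [Field S] (p q : S) (x : S × S × S × S)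
    (hv2 : x.2.2.2 ≠ 0) (hu2 : x.2.1 ≠ 0) :
    let f : S → S → S → S → S := fun a b _ d => -a - b + (p ^ 2 - q ^ 2) / d
    let δ0 : S × S × S × S → S × S × S × S := fun y =>
      (y.2.1, f y.1 y.2.1 y.2.2.1 y.2.2.2, y.2.2.2, f y.2.2.1 y.2.2.2 y.1 y.2.1)
    let δ1 : S × S × S × S → S × S × S × S := fun y =>
      (y.2.1, f y.1 y.2.1 y.2.2.1 y.2.2.2, y.2.2.2, y.2.2.1)
    let δ2 : S × S × S × S → S × S × S × S := fun y =>
      (y.2.1, y.1, y.2.2.2, f y.2.2.1 y.2.2.2 y.1 y.2.1)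
    let δ3 : S × S × S × S → S × S × S × S := fun y =>
      (y.2.1, y.1, y.2.2.2, y.2.2.1)
    δ0 x = δ1 (δ3 (δ2 x)) ∧ δ0 x = δ2 (δ3 (δ1 x)) :=
  stmt4_general p q x
end

section
/- With δ₀ : (u₁,u₂,v₁,v₂) ↦ (u₂, -u₁-u₂+(p²-q²)/v₂, v₂, -v₁-v₂+(p²-q²)/u₂) and δ₃ : (u₁,u₂,v₁,v₂) ↦ (u₂, u₁, v₂, v₁), the involution δ₃ is a reversing symmetry of δ₀: δ₀ ∘ δ₃ ∘ δ₀ = δ₃ on the domain where both sides are defined. -/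
/-- The involution `δ₃` is a reversing symmetry of the (2,1)-reduction `δ₀` of the
two-component potential KdV system: `δ₀ ∘ δ₃ ∘ δ₀ = δ₃` wherever defined. -/
theorem stmt5 {S : Type*} [Field S] (p q : S) (x : S × S × S × S)
    (hv2 : x.2.2.2 ≠ 0) (hu2 : x.2.1 ≠ 0) :
    let δ0 : S × S × S × S → S × S × S × S := fun y =>
      (y.2.1, -y.1 - y.2.1 + (p ^ 2 - q ^ 2) / y.2.2.2,
       y.2.2.2, -y.2.2.1 - y.2.2.2 + (p ^ 2 - q ^ 2) / y.2.1)
    let δ3 : S × S × S × S → S × S × S × S := fun y =>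
      (y.2.1, y.1, y.2.2.2, y.2.2.1)
    δ0 (δ3 (δ0 x)) = δ3 x := by
  simp only [Prod.ext_iff]
  refine ⟨trivial, ?_, trivial, ?_⟩ <;> field_simp <;> ring
end

section
/- Let S be a field, p, q ∈ S, and P = p²-q²-u₁v₂. The map δ : (u₁,u₂,v₁,v₂) ↦ (u₂, -u₁-u₂+(p²-q²)/v₂, v₂, v₁ - α/(β(u₁+u₂)P)) preserves H = α(P - Q) + β(u₁+u₂)(v₁+v₂)PQ, where Q = p²-q²-u₂v₁ and α, β ∈ S; i.e. H(δ(x)) = H(x) whenever v₂ ≠ 0, β ≠ 0, u₁+u₂ ≠ 0 and P ≠ 0. -/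
set_option maxHeartbeats 2000000

/-- The first dual system with respect to `H = αH₁ + βH₂` of the (2,1)-reduction of
the two-component potential KdV system preserves `H`. -/
theorem stmt6 {S : Type*} [Field S] (p q α β u1 u2 v1 v2 : S)
    (hv2 : v2 ≠ 0) (hβ : β ≠ 0) (hu : u1 + u2 ≠ 0)
    (hP : p ^ 2 - q ^ 2 - u1 * v2 ≠ 0) :
    let H : S → S → S → S → S := fun a b c d =>
      α * ((p ^ 2 - q ^ 2 - a * d) - (p ^ 2 - q ^ 2 - b * c))
        + β * (a + b) * (c + d) * (p ^ 2 - q ^ 2 - a * d) * (p ^ 2 - q ^ 2 - b * c)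
    H u2 (-u1 - u2 + (p ^ 2 - q ^ 2) / v2) v2
      (v1 - α / (β * (u1 + u2) * (p ^ 2 - q ^ 2 - u1 * v2)))
      = H u1 u2 v1 v2 := by
  intro H
  simp only [H]
  set w : S := (p ^ 2 - q ^ 2) / v2 with hw
  set e : S := α / (β * (u1 + u2) * (p ^ 2 - q ^ 2 - u1 * v2)) with he
  clear_value w e
  have hK : β * (u1 + u2) * (p ^ 2 - q ^ 2 - u1 * v2) ≠ 0 :=
    mul_ne_zero (mul_ne_zero hβ hu) hP
  have h1 : w * v2 = p ^ 2 - q ^ 2 := by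
    rw [hw]; field_simp
  have h2 : β * (u1 + u2) * (p ^ 2 - q ^ 2 - u1 * v2) * e = α := by
    rw [he]; field_simp
  linear_combination (norm := (field_simp; ring1))
    (α + β * (v1 + v2 - e) * ((p ^ 2 - q ^ 2 - u2 * v1) + u2 * e) *
      ((u1 + u2) * v2 - (w * v2 - (p ^ 2 - q ^ 2)) - (p ^ 2 - q ^ 2 - u1 * v2)) / v2) * h1
    + ((v1 + v2) * u2 - (p ^ 2 - q ^ 2 - u2 * v1) - u2 * e) * h2
end

section
/- Let S be a field, p, q ∈ S, and define on S⁴ the map F : (u₁,u₂,v₁,v₂) ↦ (u₂, u₁ - (p-q)u₂/(u₂v₂+1), v₂, v₁ + (p-q)v₂/(u₂v₂+1)). Then both H₁ = u₁v₂ + u₂v₁ and H₂ = u₁u₂v₁v₂ + p·u₁v₂ + q·u₂v₁ + u₁v₁ + u₂v₂ are integrals of F: Hᵢ(F(x)) = Hᵢ(x) for i = 1,2 whenever u₂v₂ + 1 ≠ 0. -/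
/-- Both `H₁` and `H₂` are integrals of the (1,1)-reduction (d = 2) of the lattice
Nonlinear Schrödinger system. -/
theorem stmt7 {S : Type*} [Field S] (p q u1 u2 v1 v2 : S)
    (h : u2 * v2 + 1 ≠ 0) :
    let F : S × S × S × S := (u2, u1 - (p - q) * u2 / (u2 * v2 + 1),
      v2, v1 + (p - q) * v2 / (u2 * v2 + 1))
    let H1 : S → S → S → S → S := fun a b c d => a * d + b * c
    let H2 : S → S → S → S → S := fun a b c d =>
      a * b * c * d + p * (a * d) + q * (b * c) + a * c + b * d
    H1 F.1 F.2.1 F.2.2.1 F.2.2.2 = H1 u1 u2 v1 v2 ∧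
    H2 F.1 F.2.1 F.2.2.1 F.2.2.2 = H2 u1 u2 v1 v2 := by
  intro F H1 H2
  simp only [F, H1, H2]
  have he : (p - q) / (u2 * v2 + 1) * (u2 * v2 + 1) = p - q := div_mul_cancel₀ _ h
  constructor
  · ring
  · linear_combination (u1 * v2 - u2 * v1 - (p - q) / (u2 * v2 + 1) * u2 * v2) * he
end

section
/- Let S be a field, p, q ∈ S, and define δ₁ : (u₁,u₂,v₁,v₂) ↦ (u₂, (p·v₂-q)/(u₁u₂(p-q·v₂)), v₂, v₁) on S⁴. Then δ₁⁶ = id on the set where all six iterates are defined. -/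
/-!
Write the orbit as `(u₀, u₁, v₀, v₁), (u₁, u₂, v₁, v₀), …` with `r v = (p v - q)/(p - q v)`.
The map is the recurrence `uₙ uₙ₊₁ uₙ₊₂ = r(v)`, where `v` alternates between the last two
coordinates. Since the triple product is 2-periodic, three steps rescale `(u₀, u₁)` by
`(r v₀ / r v₁, r v₁ / r v₀)` and swap the `v`'s, and the next three steps undo this.
-/

def tripleProductMap {K : Type*} [Field K] (g : K → K) (y : K × K × K × K) : K × K × K × K :=
  (y.2.1, g y.2.2.2 / (y.1 * y.2.1), y.2.2.2, y.2.2.1)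

namespace tripleProductMap

variable {K : Type*} [Field K] (g : K → K)

lemma iterate_three {a b c d : K} (ha : a ≠ 0) (hb : b ≠ 0) (hc : g c ≠ 0) (hd : g d ≠ 0) :
    (tripleProductMap g)^[3] (a, b, c, d) = (a * (g c / g d), b * (g d / g c), d, c) := by
  simp only [Function.iterate_succ, Function.iterate_zero, Function.comp_apply, id_eq,
    tripleProductMap, Prod.mk.injEq, and_true]
  constructor <;> field_simp

lemma iterate_six {a b c d : K} (ha : a ≠ 0) (hb : b ≠ 0) (hc : g c ≠ 0) (hd : g d ≠ 0) :
    (tripleProductMap g)^[6] (a, b, c, d) = (a, b, c, d) := by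
  rw [show 6 = 3 + 3 from rfl, Function.iterate_add_apply, iterate_three g ha hb hc hd,
    iterate_three g (by positivity) (by positivity) hd hc]
  simp only [Prod.mk.injEq, and_true]
  constructor <;> field_simp

lemma apply_ne_zero_of_fst_mul_snd_ne_zero {y : K × K × K × K}
    (h : (tripleProductMap g y).1 * (tripleProductMap g y).2.1 ≠ 0) : g y.2.2.2 ≠ 0 := by
  intro hg
  simp [tripleProductMap, hg] at h

end tripleProductMap

/-- The dual map `δ₁` of the (2,4)-reduction of the lattice modified KdV equation
has period 6, wherever all six iterates are defined. -/
theorem stmt9 {S : Type*} [Field S] (p q : S) (x : S × S × S × S) :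
    let δ : S × S × S × S → S × S × S × S := fun y =>
      (y.2.1, (p * y.2.2.2 - q) / (y.1 * y.2.1 * (p - q * y.2.2.2)),
       y.2.2.2, y.2.2.1)
    (∀ k < 6, (δ^[k] x).1 * (δ^[k] x).2.1 * (p - q * (δ^[k] x).2.2.2) ≠ 0) →
    δ^[6] x = x := by
  intro δ h
  have hδ : δ = tripleProductMap fun v => (p * v - q) / (p - q * v) := by
    funext y
    simp only [δ, tripleProductMap, div_div, mul_comm]
  obtain ⟨a, b, c, d⟩ := x
  rw [hδ] at h ⊢
  have hab : a * b ≠ 0 := left_ne_zero_of_mul (h 0 (by norm_num))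
  have hd := left_ne_zero_of_mul (h 1 (by norm_num))
  have hc := left_ne_zero_of_mul (h 2 (by norm_num))
  rw [Function.iterate_one] at hd
  rw [Function.iterate_succ_apply', Function.iterate_one] at hc
  exact tripleProductMap.iterate_six _ (left_ne_zero_of_mul hab) (right_ne_zero_of_mul hab)
    (tripleProductMap.apply_ne_zero_of_fst_mul_snd_ne_zero _ hc)
    (tripleProductMap.apply_ne_zero_of_fst_mul_snd_ne_zero _ hd)
end

section
/- Let S be a field, p, q ∈ S, f(u,v) = (p·v₂-q)/(u₁u₂(p-q·v₂)), and define δ₀ : (u₁,u₂,v₁,v₂) ↦ (u₂, f(u,v), v₂, f(v,u)), δ₁ : (u₁,u₂,v₁,v₂) ↦ (u₂, f(u,v), v₂, v₁), δ₂ : (u₁,u₂,v₁,v₂) ↦ (u₂, u₁, v₂, f(v,u)), and δ₃ : (u₁,u₂,v₁,v₂) ↦ (u₂, u₁, v₂, v₁). Then δ₀ = δ₁ ∘ δ₃ ∘ δ₂ = δ₂ ∘ δ₃ ∘ δ₁ on the domain where all maps are defined. -/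
/-- The (2,4)-reduction `δ₀` of the lattice modified KdV equation equals the
compositions `δ₁ ∘ δ₃ ∘ δ₂` and `δ₂ ∘ δ₃ ∘ δ₁` of its duals, wherever defined. -/
theorem stmt10 {S : Type*} [Field S] (p q : S) (x : S × S × S × S)
    (h1 : x.1 * x.2.1 * (p - q * x.2.2.2) ≠ 0)
    (h2 : x.2.2.1 * x.2.2.2 * (p - q * x.2.1) ≠ 0) :
    let f : S → S → S → S → S := fun a b _ d => (p * d - q) / (a * b * (p - q * d))
    let δ0 : S × S × S × S → S × S × S × S := fun y =>
      (y.2.1, f y.1 y.2.1 y.2.2.1 y.2.2.2, y.2.2.2, f y.2.2.1 y.2.2.2 y.1 y.2.1)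
    let δ1 : S × S × S × S → S × S × S × S := fun y =>
      (y.2.1, f y.1 y.2.1 y.2.2.1 y.2.2.2, y.2.2.2, y.2.2.1)
    let δ2 : S × S × S × S → S × S × S × S := fun y =>
      (y.2.1, y.1, y.2.2.2, f y.2.2.1 y.2.2.2 y.1 y.2.1)
    let δ3 : S × S × S × S → S × S × S × S := fun y =>
      (y.2.1, y.1, y.2.2.2, y.2.2.1)
    δ0 x = δ1 (δ3 (δ2 x)) ∧ δ0 x = δ2 (δ3 (δ1 x)) := by
  exact ⟨rfl, rfl⟩
end

section
/- Let S be a field, p, q ∈ S, and consider the map δ₀ on S⁴ given for d = 2 by (u₁,u₂,v₁,v₂) ↦ (u₂, v₁(p - q·v₂)/(p - q·u₂), v₂, (1/(u₁v₁u₂v₂))·(p·u₂v₂ - q)/(p - q·v₂)). Then H = p(u₁ + v₁ + 1/(u₁v₁) + u₂ + v₂ + 1/(u₂v₂)) - q(u₁u₂ + v₁v₂ + 1/(u₁u₂v₁v₂)) is an integral of δ₀: H(δ₀(x)) = H(x) whenever all denominators are nonzero. -/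
set_option maxHeartbeats 4000000 in
/-- For d = 2, `H` is an integral of the (d+1,-1)-reduction `δ₀` of the modified
Boussinesq system. -/
theorem stmt11 {S : Type*} [Field S] (p q u1 u2 v1 v2 : S) :
    let f1 : S := v1 * (p - q * v2) / (p - q * u2)
    let g1 : S := (1 / (u1 * v1 * u2 * v2)) * (p * u2 * v2 - q) / (p - q * v2)
    let H : S → S → S → S → S := fun a b c d =>
      p * (a + c + 1 / (a * c) + b + d + 1 / (b * d))
        - q * (a * b + c * d + 1 / (a * b * c * d))
    u1 ≠ 0 → u2 ≠ 0 → v1 ≠ 0 → v2 ≠ 0 → p - q * u2 ≠ 0 → p - q * v2 ≠ 0 →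
    f1 ≠ 0 → g1 ≠ 0 →
    H u2 f1 v2 g1 = H u1 u2 v1 v2 := by
  intro f1 g1 H hu1 hu2 hv1 hv2 hpu hpv hf hg
  have hpq : p * u2 * v2 - q ≠ 0 := by
    intro h; apply hg; simp [g1, h]
  have hg1 : g1 = (p * u2 * v2 - q) / (u1 * v1 * u2 * v2 * (p - q * v2)) := by
    simp only [g1, one_div, div_div]
    rw [inv_mul_eq_div, div_div]
  have hf1 : f1 = v1 * (p - q * v2) / (p - q * u2) := rfl
  have hD : u1 * v1 * u2 * v2 * (p - q * v2) ≠ 0 :=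
    mul_ne_zero (mul_ne_zero (mul_ne_zero (mul_ne_zero hu1 hv1) hu2) hv2) hpv
  have hAu : (p - q * u2) * (u1 * u2 * v2) ≠ 0 :=
    mul_ne_zero hpu (mul_ne_zero (mul_ne_zero hu1 hu2) hv2)
  have hfg : f1 * g1 = (p * u2 * v2 - q) / ((p - q * u2) * (u1 * u2 * v2)) := by
    rw [hf1, hg1, div_mul_div_comm, div_eq_div_iff (mul_ne_zero hpu hD) hAu]
    ring
  have hufvg : u2 * f1 * v2 * g1 = (p * u2 * v2 - q) / ((p - q * u2) * u1) := by
    have h : u2 * f1 * v2 * g1 = f1 * g1 * (u2 * v2) := by ring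
    rw [h, hfg, div_mul_eq_mul_div, div_eq_div_iff hAu (mul_ne_zero hpu hu1)]
    ring
  have h1 : 1 / (f1 * g1) = (p - q * u2) * (u1 * u2 * v2) / (p * u2 * v2 - q) := by
    rw [hfg, one_div, inv_div]
  have h2 : 1 / (u2 * f1 * v2 * g1) = (p - q * u2) * u1 / (p * u2 * v2 - q) := by
    rw [hufvg, one_div, inv_div]
  simp only [H]
  rw [h1, h2, hf1, hg1]
  set A := p - q * u2 with hA
  set B := p - q * v2 with hB
  set C := p * u2 * v2 - q with hC
  clear_value A B C
  clear hf hg hf1 hg1 hfg hufvg h1 h2 f1 g1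
  have hM1 : u2 * v2 * A * (u1 * v1 * u2 * v2 * B) * C ≠ 0 :=
    mul_ne_zero (mul_ne_zero (mul_ne_zero (mul_ne_zero hu2 hv2) hpu) hD) hpq
  have hM2 : u1 * v1 * (u2 * v2) * (u1 * u2 * v1 * v2) ≠ 0 :=
    mul_ne_zero (mul_ne_zero (mul_ne_zero hu1 hv1) (mul_ne_zero hu2 hv2))
      (mul_ne_zero (mul_ne_zero (mul_ne_zero hu1 hu2) hv1) hv2)
  field_simp
  rw [hA, hB, hC]
  ring
end

section
/- Let d ≥ 2 and let S be a field. Define U = u₂⋯u_d, V = v₂⋯v_d, and on S^{2d} the map δ₀ : (u₁,…,u_d,v₁,…,v_d) ↦ (u₂,…,u_d, f₁, v₂,…,v_d, g₁), where f₁ = v₁(p - qV)/(p - qU) and g₁ = (1/(u₁v₁UV))·(pUV - q)/(p - qV). Then H = p·Σ_{k=1}^d (u_k + v_k + 1/(u_kv_k)) - q(u₁U + v₁V + 1/(u₁Uv₁V)) satisfies H(δ₀(x)) = H(x) whenever all denominators are nonzero. -/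
set_option maxHeartbeats 1000000


/-- `H` is an integral of the (d+1,-1)-reduction `δ₀` of the modified Boussinesq
system, for general d ≥ 2. -/
theorem stmt12 {S : Type*} [Field S] (p q : S) (d : ℕ) (hd : 2 ≤ d)
    (u v : Fin d → S) (hu : ∀ k, u k ≠ 0) (hv : ∀ k, v k ≠ 0) :
    let z : Fin d := ⟨0, by omega⟩
    let U : S := ∏ k ∈ Finset.univ.erase z, u k
    let V : S := ∏ k ∈ Finset.univ.erase z, v k
    let f1 : S := v z * (p - q * V) / (p - q * U)
    let g1 : S := (1 / (u z * v z * U * V)) * (p * U * V - q) / (p - q * V)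
    let u' : Fin d → S := fun i => if h : (i : ℕ) + 1 < d then u ⟨i + 1, h⟩ else f1
    let v' : Fin d → S := fun i => if h : (i : ℕ) + 1 < d then v ⟨i + 1, h⟩ else g1
    let H : (Fin d → S) → (Fin d → S) → S := fun a b =>
      p * ∑ k, (a k + b k + 1 / (a k * b k))
        - q * (a z * (∏ m ∈ Finset.univ.erase z, a m)
             + b z * (∏ m ∈ Finset.univ.erase z, b m)
             + 1 / (a z * (∏ m ∈ Finset.univ.erase z, a m)
                  * b z * (∏ m ∈ Finset.univ.erase z, b m)))
    p - q * U ≠ 0 → p - q * V ≠ 0 → f1 ≠ 0 → g1 ≠ 0 →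
    H u' v' = H u v := by
  obtain ⟨n, rfl⟩ : ∃ n, d = n + 1 := ⟨d - 1, by omega⟩
  intro z U V f1 g1 u' v' H hpU hpV hf1 hg1
  have hn : 0 < n := by omega
  have hz0 : z = 0 := by simp [z, Fin.ext_iff]
  have hU0 : U ≠ 0 := Finset.prod_ne_zero_iff.mpr fun k _ => hu k
  have hV0 : V ≠ 0 := Finset.prod_ne_zero_iff.mpr fun k _ => hv k
  have huz := hu z
  have hvz := hv z
  have hPQ : p * U * V - q ≠ 0 := by
    intro h
    apply hg1
    show (1 / (u z * v z * U * V)) * (p * U * V - q) / (p - q * V) = 0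
    rw [h]; simp
  have hcu : ∀ i : Fin n, u' i.castSucc = u i.succ := by
    intro i
    have hi : (i.castSucc : ℕ) + 1 < n + 1 := by simpa using i.isLt
    show (if h : (i.castSucc : ℕ) + 1 < n + 1 then u ⟨i.castSucc + 1, h⟩ else f1) = u i.succ
    rw [dif_pos hi]
    exact congrArg u (Fin.ext (by simp))
  have hcv : ∀ i : Fin n, v' i.castSucc = v i.succ := by
    intro i
    have hi : (i.castSucc : ℕ) + 1 < n + 1 := by simpa using i.isLt
    show (if h : (i.castSucc : ℕ) + 1 < n + 1 then v ⟨i.castSucc + 1, h⟩ else g1) = v i.succ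
    rw [dif_pos hi]
    exact congrArg v (Fin.ext (by simp))
  have hlu : u' (Fin.last n) = f1 := by
    show (if h : (Fin.last n : ℕ) + 1 < n + 1 then u ⟨Fin.last n + 1, h⟩ else f1) = f1
    rw [dif_neg (by simp)]
  have hlv : v' (Fin.last n) = g1 := by
    show (if h : (Fin.last n : ℕ) + 1 < n + 1 then v ⟨Fin.last n + 1, h⟩ else g1) = g1
    rw [dif_neg (by simp)]
  have hsu : ∏ i : Fin n, u i.succ = U := by
    have h1 : u z * U = ∏ k, u k := Finset.mul_prod_erase _ _ (Finset.mem_univ z)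
    rw [Fin.prod_univ_succ, ← hz0] at h1
    exact (mul_left_cancel₀ huz h1).symm
  have hsv : ∏ i : Fin n, v i.succ = V := by
    have h1 : v z * V = ∏ k, v k := Finset.mul_prod_erase _ _ (Finset.mem_univ z)
    rw [Fin.prod_univ_succ, ← hz0] at h1
    exact (mul_left_cancel₀ hvz h1).symm
  have hprodu : u' z * ∏ k ∈ Finset.univ.erase z, u' k = U * f1 := by
    rw [Finset.mul_prod_erase _ _ (Finset.mem_univ z), Fin.prod_univ_castSucc]
    simp only [hcu, hlu, hsu]
  have hprodv : v' z * ∏ k ∈ Finset.univ.erase z, v' k = V * g1 := by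
    rw [Finset.mul_prod_erase _ _ (Finset.mem_univ z), Fin.prod_univ_castSucc]
    simp only [hcv, hlv, hsv]
  have hsum : (∑ k, (u' k + v' k + 1 / (u' k * v' k))) + (u z + v z + 1 / (u z * v z))
      = (∑ k, (u k + v k + 1 / (u k * v k))) + (f1 + g1 + 1 / (f1 * g1)) := by
    rw [Fin.sum_univ_castSucc (f := fun k => u' k + v' k + 1 / (u' k * v' k)),
        Fin.sum_univ_succ (f := fun k => u k + v k + 1 / (u k * v k)), hz0]
    simp only [hcu, hcv, hlu, hlv]
    ring
  have hS' : (∑ k, (u' k + v' k + 1 / (u' k * v' k)))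
      = (∑ k, (u k + v k + 1 / (u k * v k))) + (f1 + g1 + 1 / (f1 * g1))
        - (u z + v z + 1 / (u z * v z)) := by linear_combination hsum
  show p * ∑ k, (u' k + v' k + 1 / (u' k * v' k))
        - q * (u' z * (∏ m ∈ Finset.univ.erase z, u' m)
             + v' z * (∏ m ∈ Finset.univ.erase z, v' m)
             + 1 / (u' z * (∏ m ∈ Finset.univ.erase z, u' m)
                  * v' z * (∏ m ∈ Finset.univ.erase z, v' m)))
      = p * ∑ k, (u k + v k + 1 / (u k * v k))
        - q * (u z * (∏ m ∈ Finset.univ.erase z, u m)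
             + v z * (∏ m ∈ Finset.univ.erase z, v m)
             + 1 / (u z * (∏ m ∈ Finset.univ.erase z, u m)
                  * v z * (∏ m ∈ Finset.univ.erase z, v m)))
  rw [mul_assoc (u' z * _) (v' z), mul_assoc (u z * _) (v z), hprodu, hprodv, hS']
  have hUdef : u z * ∏ m ∈ Finset.univ.erase z, u m = u z * U := rfl
  have hVdef : v z * ∏ m ∈ Finset.univ.erase z, v m = v z * V := rfl
  rw [hUdef, hVdef]
  have hf : f1 = v z * (p - q * V) / (p - q * U) := rfl
  have hg : g1 = (1 / (u z * v z * U * V)) * (p * U * V - q) / (p - q * V) := rfl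
  clear_value z U V f1 g1 u' v' H
  have A1 : p * f1 - q * (U * f1) = p * v z - q * (v z * V) := by
    rw [hf]; field_simp
  have hgval : g1 = (p * U * V - q) / (u z * v z * U * V * (p - q * V)) := by
    rw [hg, one_div, inv_mul_eq_div, div_div]
  have hA2a : (p - q * V) * g1 = (p * U * V - q) / (u z * v z * U * V) := by
    calc (p - q * V) * g1
        = ((p - q * V) * (p * U * V - q)) / ((p - q * V) * (u z * v z * U * V)) := by
          rw [hgval]; ring
      _ = (p * U * V - q) / (u z * v z * U * V) := mul_div_mul_left _ _ hpV
  have A2 : p * g1 - q * (V * g1)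
      = p * (1 / (u z * v z)) - q * (1 / (u z * U * (v z * V))) := by
    rw [show p * g1 - q * (V * g1) = (p - q * V) * g1 from by ring, hA2a]
    field_simp
  have hfg2 : f1 * g1 = (p * U * V - q) / (u z * U * V * (p - q * U)) := by
    rw [hf, hgval, div_mul_div_comm]
    rw [show (p - q * U) * (u z * v z * U * V * (p - q * V))
        = (v z * (p - q * V)) * (u z * U * V * (p - q * U)) from by ring]
    exact mul_div_mul_left _ _ (mul_ne_zero hvz hpV)
  have A3 : p * (1 / (f1 * g1)) - q * (1 / (U * f1 * (V * g1)))
      = p * u z - q * (u z * U) := by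
    have e2 : U * f1 * (V * g1) = (U * V) * (f1 * g1) := by ring
    have e3 : 1 / (f1 * g1) = (u z * U * V * (p - q * U)) / (p * U * V - q) := by
      rw [hfg2, one_div, inv_div]
    have e4 : 1 / (U * f1 * (V * g1))
        = (u z * U * V * (p - q * U)) / ((U * V) * (p * U * V - q)) := by
      rw [e2, hfg2, ← mul_div_assoc, one_div, inv_div]
    rw [e3, e4]
    field_simp
  linear_combination A1 + A2 + A3
end
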